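/- Let A be a commutative algebra with a cubic form N : A → k satisfying (x²)² = N(x)x for all x, with nonzero associative trace form ⟨·|·⟩ such that N(x) = ⟨x|x²⟩. Then the algebra A(A) = k ⊕ A ⊕ A ⊕ k with multiplication (α,x,y,β)·(α',x',y',β') = (αα' + 3⟨x|y'⟩, αx' + β'x + 2yy', α'y + βy' + 2xx', ββ' + 3⟨y|x'⟩) is unital, and the map (α,x,y,β) ↦ (β,x,y,α) is an involution of A(A). -/
import Mathlib


section
variable {k : Type*} [Field k] {A : Type*} [NonUnitalNonAssocRing A] [Module k A]

/-- Multiplication of the algebra `A(A) = k ⊕ A ⊕ A ⊕ k` attached to an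
admissible cubic algebra `A` with trace form `B`, elements written as quadruples
`(α, x, y, β)` standing for the matrix `(α x; y β)`. -/
def aCubicMul (B : A →ₗ[k] A →ₗ[k] k) (z w : k × A × A × k) : k × A × A × k :=
  (z.1 * w.1 + 3 * B z.2.1 w.2.2.1,
   z.1 • w.2.1 + w.2.2.2 • z.2.1 + 2 • (z.2.2.1 * w.2.2.1),
   w.1 • z.2.2.1 + z.2.2.2 • w.2.2.1 + 2 • (z.2.1 * w.2.1),
   z.2.2.2 * w.2.2.2 + 3 * B z.2.2.1 w.2.1)

/-- The exchange map `(α, x, y, β) ↦ (β, x, y, α)`. -/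
def aCubicInv (z : k × A × A × k) : k × A × A × k := (z.2.2.2, z.2.1, z.2.2.1, z.1)

end

/-- Let `A` be a commutative algebra with a cubic form `N`
satisfying `(x²)² = N(x)x`, with nonzero symmetric associative trace form
`⟨·|·⟩ = B` such that `N(x) = ⟨x|x²⟩`.  Then the algebra
`A(A) = k ⊕ A ⊕ A ⊕ k` with multiplication
`(α,x,y,β)(α',x',y',β') = (αα'+3⟨x|y'⟩, αx'+β'x+2yy', α'y+βy'+2xx', ββ'+3⟨y|x'⟩)`
is unital (with unit `(1,0,0,1)`), and `(α,x,y,β) ↦ (β,x,y,α)` is an involution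
(involutive antiautomorphism) of `A(A)`. -/
theorem structurableCubic_unital_and_involution
    (k : Type*) [Field k] (hk2 : (2 : k) ≠ 0) (hk3 : (3 : k) ≠ 0)
    (A : Type*) [NonUnitalNonAssocRing A] [Module k A]
    [SMulCommClass k A A] [IsScalarTower k A A]
    (hcomm : ∀ x y : A, x * y = y * x)
    (N : A → k) (hN3 : ∀ (c : k) (x : A), N (c • x) = c ^ 3 * N x)
    (hNadm : ∀ x : A, (x * x) * (x * x) = N x • x)
    (B : A →ₗ[k] A →ₗ[k] k) (hBne : B ≠ 0)
    (hBsymm : ∀ x y : A, B x y = B y x)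
    (hBassoc : ∀ x y z : A, B (x * y) z = B x (y * z))
    (hNB : ∀ x : A, N x = B x (x * x)) :
    (∀ z : k × A × A × k,
      aCubicMul B ((1 : k), (0 : A), (0 : A), (1 : k)) z = z ∧
      aCubicMul B z ((1 : k), (0 : A), (0 : A), (1 : k)) = z) ∧
    (∀ z w : k × A × A × k,
      aCubicInv (aCubicMul B z w) = aCubicMul B (aCubicInv w) (aCubicInv z)) ∧
    (∀ z : k × A × A × k, aCubicInv (aCubicInv z) = z) := by
  refine ⟨fun z => ?_, fun z w => ?_, fun z => rfl⟩
  · constructor <;>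
      simp [aCubicMul, Prod.ext_iff, hcomm]
  · simp only [aCubicMul, aCubicInv, Prod.ext_iff]
    refine ⟨?_, ?_, ?_, ?_⟩
    · rw [mul_comm, hBsymm]
    · rw [hcomm]; ring_nf; abel
    · rw [hcomm]; ring_nf; abel
    · rw [mul_comm, hBsymm]
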